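/- arXiv:1907.03605 — 3 statements merged into one kernel-verified Lean document; each statement's English description precedes it below -/
import Mathlib

section
/- Let S : ℝᴺ → ℝᴺ be continuous, f̄ ∈ ℝᴺ, and suppose there exist an index l and a constant S_min with S_j(q) > S_min > f̄_l for all j and all q ∈ ℝᴺ. Then there is no twice continuously differentiable T-periodic solution q : ℝ → ℝᴺ of M q'' + C q' + S(q) = f(t), where f is continuous T-periodic with mean f̄ and M, C are constant N×N matrices. -/
/-- If the nonlinearity has a global minimum `Smin` above the `l`-th component of the
mean forcing, then `M q'' + C q' + S(q) = f(t)` has no C² `T`-periodic solution. -/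
theorem stmt2 (N : ℕ) (T : ℝ) (hT : 0 < T)
    (M C : Matrix (Fin N) (Fin N) ℝ)
    (S : (Fin N → ℝ) → (Fin N → ℝ)) (hS : Continuous S)
    (f : ℝ → (Fin N → ℝ)) (hf : Continuous f) (hfper : Function.Periodic f T)
    (l : Fin N) (Smin : ℝ)
    (hmin : ∀ (j : Fin N) (x : Fin N → ℝ), Smin < S x j)
    (hl : ((1/T) • ∫ t in (0:ℝ)..T, f t) l < Smin)
    (q : ℝ → (Fin N → ℝ)) (hq : ContDiff ℝ 2 q) (hqper : Function.Periodic q T)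
    (heq : ∀ t, M.mulVec (deriv (deriv q) t) + C.mulVec (deriv q t) + S (q t) = f t) :
    False := by
  have h2 : ContDiff ℝ ((1 : ℕ) + 1) q := by exact_mod_cast hq
  obtain ⟨hdq, -, hq1⟩ := contDiff_succ_iff_deriv.mp h2
  have h1 : ContDiff ℝ ((0 : ℕ) + 1) (deriv q) := by exact_mod_cast hq1
  obtain ⟨hddq, -, hq0⟩ := contDiff_succ_iff_deriv.mp h1
  have cq : Continuous q := hq.continuous
  have cdq : Continuous (deriv q) := hq1.continuous
  have cddq : Continuous (deriv (deriv q)) := hq0.continuous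
  -- periodicity of q and deriv q at endpoints
  have hqT : q T = q 0 := by simpa using hqper 0
  have hqfun : (fun s => q (s + T)) = q := funext fun s => hqper s
  have hdqT : deriv q T = deriv q 0 := by
    have := deriv_comp_add_const q T 0
    rw [hqfun] at this
    simpa using this.symm
  -- integrals of derivatives vanish
  have I1 : ∫ t in (0:ℝ)..T, deriv q t = 0 := by
    rw [intervalIntegral.integral_deriv_eq_sub (fun t _ => hdq t)
      (cdq.intervalIntegrable _ _), hqT, sub_self]
  have I2 : ∫ t in (0:ℝ)..T, deriv (deriv q) t = 0 := by
    rw [intervalIntegral.integral_deriv_eq_sub (fun t _ => hddq t)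
      (cddq.intervalIntegrable _ _), hdqT, sub_self]
  -- matrix multiplication as continuous linear maps
  have hMint : ∫ t in (0:ℝ)..T, M.mulVec (deriv (deriv q) t) = 0 := by
    have := (M.mulVecLin.toContinuousLinearMap).intervalIntegral_comp_comm
      (cddq.intervalIntegrable (μ := MeasureTheory.volume) (0:ℝ) T)
    simpa [I2] using this
  have hCint : ∫ t in (0:ℝ)..T, C.mulVec (deriv q t) = 0 := by
    have := (C.mulVecLin.toContinuousLinearMap).intervalIntegral_comp_comm
      (cdq.intervalIntegrable (μ := MeasureTheory.volume) (0:ℝ) T)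
    simpa [I1] using this
  -- integrate the equation
  have cMq : Continuous fun t => M.mulVec (deriv (deriv q) t) :=
    (M.mulVecLin.toContinuousLinearMap).continuous.comp cddq
  have cCq : Continuous fun t => C.mulVec (deriv q t) :=
    (C.mulVecLin.toContinuousLinearMap).continuous.comp cdq
  have cSq : Continuous fun t => S (q t) := hS.comp cq
  have Ieq : ∫ t in (0:ℝ)..T, S (q t) = ∫ t in (0:ℝ)..T, f t := by
    have : ∫ t in (0:ℝ)..T,
        (M.mulVec (deriv (deriv q) t) + C.mulVec (deriv q t) + S (q t))
        = ∫ t in (0:ℝ)..T, f t := by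
      exact intervalIntegral.integral_congr fun t _ => heq t
    rw [intervalIntegral.integral_add (f := fun t => M.mulVec (deriv (deriv q) t) + C.mulVec (deriv q t)) ((cMq.add cCq).intervalIntegrable _ _)
        (cSq.intervalIntegrable _ _),
      intervalIntegral.integral_add (cMq.intervalIntegrable _ _)
        (cCq.intervalIntegrable _ _), hMint, hCint] at this
    simpa using this
  -- project onto component l
  have proj_comm : ∀ (g : ℝ → (Fin N → ℝ)), Continuous g →
      (∫ t in (0:ℝ)..T, g t) l = ∫ t in (0:ℝ)..T, g t l := by
    intro g hg
    have := (ContinuousLinearMap.proj (R := ℝ) (φ := fun _ : Fin N => ℝ) l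
      ).intervalIntegral_comp_comm (hg.intervalIntegrable (μ := MeasureTheory.volume) (0:ℝ) T)
    simpa using this.symm
  have hSl : (∫ t in (0:ℝ)..T, S (q t) l) = ∫ t in (0:ℝ)..T, f t l := by
    rw [← proj_comm _ cSq, ← proj_comm _ hf, Ieq]
  -- lower bound
  have hlow : T * Smin ≤ ∫ t in (0:ℝ)..T, S (q t) l := by
    have : ∫ t in (0:ℝ)..T, Smin ≤ ∫ t in (0:ℝ)..T, S (q t) l := by
      apply intervalIntegral.integral_mono_on hT.le
        (continuous_const.intervalIntegrable _ _) (((continuous_apply l).comp cSq).intervalIntegrable _ _)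
      intro t _
      exact (hmin l (q t)).le
    simpa using this
  -- upper bound from hl
  have hup : (∫ t in (0:ℝ)..T, f t l) < T * Smin := by
    have hfl : (1/T) * (∫ t in (0:ℝ)..T, f t) l < Smin := by simpa using hl
    have := proj_comm f hf
    rw [this] at hfl
    have hTne : T ≠ 0 := ne_of_gt hT
    have h' : T * (1/T * ∫ t in (0:ℝ)..T, f t l) < T * Smin :=
      mul_lt_mul_of_pos_left hfl hT
    have h'' : T * (1/T * ∫ t in (0:ℝ)..T, f t l) = ∫ t in (0:ℝ)..T, f t l := by
      field_simp
    linarith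
  linarith [hlow, hup, hSl.le, hSl.ge]
end

section
/- Let S : ℝᴺ → ℝᴺ be continuous, f̄ ∈ ℝᴺ, l an index, and S_max a constant with S_j(q) < S_max < f̄_l for all j and all q. Then the system M q'' + C q' + S(q) = f(t) with continuous T-periodic forcing f of mean f̄ admits no twice continuously differentiable T-periodic solution. -/
/-- If the nonlinearity has a global maximum `Smax` below the `l`-th component of the
mean forcing, then `M q'' + C q' + S(q) = f(t)` has no C² `T`-periodic solution. -/
theorem stmt3 (N : ℕ) (T : ℝ) (hT : 0 < T)
    (M C : Matrix (Fin N) (Fin N) ℝ)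
    (S : (Fin N → ℝ) → (Fin N → ℝ)) (hS : Continuous S)
    (f : ℝ → (Fin N → ℝ)) (hf : Continuous f) (hfper : Function.Periodic f T)
    (l : Fin N) (Smax : ℝ)
    (hmax : ∀ (j : Fin N) (x : Fin N → ℝ), S x j < Smax)
    (hl : Smax < ((1/T) • ∫ t in (0:ℝ)..T, f t) l)
    (q : ℝ → (Fin N → ℝ)) (hq : ContDiff ℝ 2 q) (hqper : Function.Periodic q T)
    (heq : ∀ t, M.mulVec (deriv (deriv q) t) + C.mulVec (deriv q t) + S (q t) = f t) :
    False := by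
  -- basic regularity facts
  have hqdiff : Differentiable ℝ q := hq.differentiable (by norm_num)
  have hq' : ContDiff ℝ 1 (deriv q) := by
    have := (contDiff_succ_iff_deriv (n := 1)).mp (by exact_mod_cast hq)
    exact this.2.2
  have hq'diff : Differentiable ℝ (deriv q) := hq'.differentiable one_ne_zero
  have hq'cont : Continuous (deriv q) := hq'diff.continuous
  have hq''cont : Continuous (deriv (deriv q)) := hq'.continuous_deriv le_rfl
  -- periodicity of deriv q
  have hq'per : Function.Periodic (deriv q) T := by
    intro t
    have h1 : deriv (fun s => q (s + T)) t = deriv q (t + T) := deriv_comp_add_const q T t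
    have h2 : (fun s => q (s + T)) = q := funext fun s => hqper s
    rw [h2] at h1
    exact h1.symm
  -- component derivatives
  have hcomp : ∀ (g : ℝ → (Fin N → ℝ)), Differentiable ℝ g → ∀ (j : Fin N) (t : ℝ),
      HasDerivAt (fun s => g s j) (deriv g t j) t := by
    intro g hg j t
    exact hasDerivAt_pi.mp (hg t).hasDerivAt j
  -- integrals of derivatives vanish by periodicity
  have hint1 : ∀ j : Fin N, (∫ t in (0:ℝ)..T, deriv q t j) = 0 := by
    intro j
    have := intervalIntegral.integral_eq_sub_of_hasDerivAt
      (f := fun s => q s j) (f' := fun s => deriv q s j)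
      (fun x _ => hcomp q hqdiff j x)
      (((continuous_apply j).comp hq'cont).intervalIntegrable 0 T)
    rw [this]
    have := hqper 0
    simp only [zero_add] at this
    rw [sub_eq_zero]
    exact congrFun this j
  have hint2 : ∀ j : Fin N, (∫ t in (0:ℝ)..T, deriv (deriv q) t j) = 0 := by
    intro j
    have := intervalIntegral.integral_eq_sub_of_hasDerivAt
      (f := fun s => deriv q s j) (f' := fun s => deriv (deriv q) s j)
      (fun x _ => hcomp (deriv q) hq'diff j x)
      (((continuous_apply j).comp hq''cont).intervalIntegrable 0 T)
    rw [this]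
    have := hq'per 0
    simp only [zero_add] at this
    rw [sub_eq_zero]
    exact congrFun this j
  -- component l of the equation
  have heql : ∀ t, S (q t) l =
      f t l - ((∑ j, M l j * deriv (deriv q) t j) + ∑ j, C l j * deriv q t j) := by
    intro t
    have h := congrFun (heq t) l
    simp only [Pi.add_apply, Matrix.mulVec, dotProduct] at h
    linarith [h]
  -- continuity of integrands
  have hSqcont : Continuous fun t => S (q t) l := ((continuous_apply l).comp (hS.comp hqdiff.continuous))
  have hflcont : Continuous fun t => f t l := (continuous_apply l).comp hf
  -- integral of S component equals integral of f component
  have key : (∫ t in (0:ℝ)..T, S (q t) l) = ∫ t in (0:ℝ)..T, f t l := by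
    have hrw : (∫ t in (0:ℝ)..T, S (q t) l) =
        ∫ t in (0:ℝ)..T, (f t l - ((∑ j, M l j * deriv (deriv q) t j) + ∑ j, C l j * deriv q t j)) := by
      apply intervalIntegral.integral_congr
      intro t _
      exact heql t
    rw [hrw]
    have hA : IntervalIntegrable (fun t => ∑ j, M l j * deriv (deriv q) t j)
        MeasureTheory.volume 0 T := by
      apply Continuous.intervalIntegrable
      exact continuous_finset_sum _ fun j _ =>
        continuous_const.mul ((continuous_apply j).comp hq''cont)
    have hB : IntervalIntegrable (fun t => ∑ j, C l j * deriv q t j)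
        MeasureTheory.volume 0 T := by
      apply Continuous.intervalIntegrable
      exact continuous_finset_sum _ fun j _ =>
        continuous_const.mul ((continuous_apply j).comp hq'cont)
    rw [intervalIntegral.integral_sub (hflcont.intervalIntegrable 0 T) (hA.add hB),
      intervalIntegral.integral_add hA hB,
      intervalIntegral.integral_finset_sum (f := fun j t => M l j * deriv (deriv q) t j) (fun j _ =>
        (continuous_const.mul ((continuous_apply j).comp hq''cont) :
          Continuous fun t => M l j * deriv (deriv q) t j).intervalIntegrable 0 T),
      intervalIntegral.integral_finset_sum (f := fun j t => C l j * deriv q t j) (fun j _ =>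
        (continuous_const.mul ((continuous_apply j).comp hq'cont) :
          Continuous fun t => C l j * deriv q t j).intervalIntegrable 0 T)]
    have e1 : ∀ j : Fin N, (∫ t in (0:ℝ)..T, M l j * deriv (deriv q) t j) = 0 := by
      intro j; rw [intervalIntegral.integral_const_mul, hint2 j, mul_zero]
    have e2 : ∀ j : Fin N, (∫ t in (0:ℝ)..T, C l j * deriv q t j) = 0 := by
      intro j; rw [intervalIntegral.integral_const_mul, hint1 j, mul_zero]
    simp [e1, e2]
  -- the integral of f component equals the component of the integral of f
  have hfl : (∫ t in (0:ℝ)..T, f t l) = (∫ t in (0:ℝ)..T, f t) l := by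
    have h := ContinuousLinearMap.intervalIntegral_comp_comm
      (ContinuousLinearMap.proj (R := ℝ) (φ := fun _ : Fin N => ℝ) l)
      (μ := MeasureTheory.volume) (a := 0) (b := T) (hf.intervalIntegrable 0 T)
    simp only [ContinuousLinearMap.proj_apply] at h
    rw [← h]
  -- bound the integral of S from above
  have hub : (∫ t in (0:ℝ)..T, S (q t) l) ≤ T * Smax := by
    calc (∫ t in (0:ℝ)..T, S (q t) l) ≤ ∫ _ in (0:ℝ)..T, Smax := by
          apply intervalIntegral.integral_mono_on hT.le
            (hSqcont.intervalIntegrable 0 T) (intervalIntegrable_const)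
          intro t _; exact (hmax l (q t)).le
      _ = T * Smax := by simp [mul_comm]
  -- derive the contradiction
  have hlb : T * Smax < (∫ t in (0:ℝ)..T, f t) l := by
    have := hl
    simp only [Pi.smul_apply, smul_eq_mul, one_div] at this
    have h2 : T * Smax < T * (T⁻¹ * (∫ t in (0:ℝ)..T, f t) l) :=
      mul_lt_mul_of_pos_left this hT
    rwa [← mul_assoc, mul_inv_cancel₀ hT.ne', one_mul] at h2
  rw [key, hfl] at hub
  linarith
end

section
/- Combining the above estimates: let q be a C² T-periodic solution of M q'' + C q' + ∇V(q) = f(t), with M symmetric positive definite, |⟨x,Cx⟩| ≥ C₀|x|² for all x (C₀ > 0), V ∈ C¹, f continuous T-periodic with C_f = (∫₀ᵀ|f|²)^{1/2}, and suppose the sign condition holds: for each j, q_j(∂V/∂q_j(q) - f̄_j) has constant nonzero sign for |q_j| > r. Then sup_{0 ≤ t ≤ T} |q(t)| ≤ √N (r + √T · C_f / C₀). -/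
open scoped RealInnerProductSpace

section Helpers

open intervalIntegral

lemma my_cs {T : ℝ} (hT : 0 ≤ T) (u v : ℝ → ℝ) (hu : Continuous u) (hv : Continuous v) :
    (∫ t in (0:ℝ)..T, u t * v t)^2 ≤
      (∫ t in (0:ℝ)..T, (u t)^2) * (∫ t in (0:ℝ)..T, (v t)^2) := by
  set A := ∫ t in (0:ℝ)..T, (u t)^2 with hA
  set B := ∫ t in (0:ℝ)..T, u t * v t with hB
  set Cc := ∫ t in (0:ℝ)..T, (v t)^2 with hCc
  have key : ∀ x : ℝ, 0 ≤ Cc * (x * x) + (2 * B) * x + A := by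
    intro x
    have h0 : (0:ℝ) ≤ ∫ t in (0:ℝ)..T, (u t + x * v t)^2 :=
      intervalIntegral.integral_nonneg hT (fun t _ => sq_nonneg _)
    have heq : (∫ t in (0:ℝ)..T, (u t + x * v t)^2)
        = A + (2 * x) * B + (x * x) * Cc := by
      have h1 : ∀ t : ℝ, (u t + x * v t)^2
          = (u t)^2 + (2 * x) * (u t * v t) + (x * x) * (v t)^2 := by
        intro t; ring
      simp_rw [h1]
      rw [intervalIntegral.integral_add, intervalIntegral.integral_add,
        intervalIntegral.integral_const_mul, intervalIntegral.integral_const_mul]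
      · exact (hu.pow 2).intervalIntegrable _ _
      · exact (continuous_const.mul (hu.mul hv)).intervalIntegrable _ _
      · exact ((hu.pow 2).add (continuous_const.mul (hu.mul hv))).intervalIntegrable _ _
      · exact (continuous_const.mul (hv.pow 2)).intervalIntegrable _ _
    nlinarith [h0, heq]
  have hd := discrim_le_zero key
  rw [discrim] at hd
  nlinarith [hd]

lemma quad_sign {n : ℕ} {C₀ : ℝ} (hC₀ : 0 < C₀)
    (L : EuclideanSpace ℝ (Fin n) →ₗ[ℝ] EuclideanSpace ℝ (Fin n))
    (h : ∀ x, C₀ * ‖x‖^2 ≤ |⟪x, L x⟫|) :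
    (∀ x, C₀ * ‖x‖^2 ≤ ⟪x, L x⟫) ∨ (∀ x, ⟪x, L x⟫ ≤ -(C₀ * ‖x‖^2)) := by
  by_contra hcon
  push_neg at hcon
  obtain ⟨⟨x, hx⟩, ⟨y, hy⟩⟩ := hcon
  have hx0 : x ≠ 0 := by rintro rfl; simp at hx
  have hy0 : y ≠ 0 := by rintro rfl; simp at hy
  have hxn' : 0 < ‖x‖ := norm_pos_iff.mpr hx0
  have hyn' : 0 < ‖y‖ := norm_pos_iff.mpr hy0
  have hxn : 0 < C₀ * ‖x‖^2 := by positivity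
  have hyn : 0 < C₀ * ‖y‖^2 := by positivity
  have hPx : ⟪x, L x⟫ < 0 := by
    have := h x
    rcases abs_cases (⟪x, L x⟫ : ℝ) with ⟨he, _⟩ | ⟨he, _⟩ <;> linarith
  have hPy : 0 < ⟪y, L y⟫ := by
    have := h y
    rcases abs_cases (⟪y, L y⟫ : ℝ) with ⟨he, _⟩ | ⟨he, _⟩ <;> linarith
  set g : ℝ → ℝ := fun s => ⟪x + s • (y - x), L (x + s • (y - x))⟫ with hg
  have hgc : Continuous g := by
    have hc : Continuous fun s : ℝ => x + s • (y - x) := by continuity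
    exact hc.inner (L.continuous_of_finiteDimensional.comp hc)
  have h01 : (0:ℝ) ∈ Set.Icc (g 0) (g 1) := by
    constructor
    · simpa [hg] using hPx.le
    · simpa [hg] using hPy.le
  obtain ⟨s, hs, hgs⟩ := intermediate_value_Icc zero_le_one hgc.continuousOn h01
  set z := x + s • (y - x) with hz
  have hz0 : z = 0 := by
    by_contra hzz
    have h2 := h z
    have habs : |(⟪z, L z⟫ : ℝ)| = 0 := by
      rw [show (⟪z, L z⟫ : ℝ) = g s from rfl, hgs, abs_zero]
    have hzn : 0 < ‖z‖ := norm_pos_iff.mpr hzz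
    have hp : 0 < C₀ * ‖z‖^2 := by positivity
    linarith [h2, habs.le, habs.ge]
  have hrel : (1 - s) • x = (-s) • y := by
    have h0 : x + s • (y - x) = 0 := hz0
    linear_combination (norm := module) h0
  have hs1 : s ≠ 1 := by
    rintro rfl
    have h2 : (0:ℝ) • x = (-1 : ℝ) • y := by norm_num at hrel ⊢; exact hrel
    rw [zero_smul] at h2
    have : y = 0 := by
      have := h2.symm
      simpa [neg_smul] using this
    exact hy0 this
  have h1s : (1 - s) ≠ 0 := sub_ne_zero.mpr (Ne.symm hs1)
  have hx_eq : x = ((1 - s)⁻¹ * (-s)) • y := by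
    have := congrArg (fun w => (1 - s)⁻¹ • w) hrel
    simpa [smul_smul, inv_mul_cancel₀ h1s] using this
  set c : ℝ := (1 - s)⁻¹ * (-s) with hc
  have : (⟪x, L x⟫ : ℝ) = c^2 * ⟪y, L y⟫ := by
    rw [hx_eq, map_smul, real_inner_smul_left, real_inner_smul_right]
    ring
  nlinarith [hPy, hPx, this, sq_nonneg c]

lemma per_integral_zero {E : Type*} [NormedAddCommGroup E] [NormedSpace ℝ E] [CompleteSpace E]
    {T : ℝ} {g g' : ℝ → E} (hder : ∀ t, HasDerivAt g (g' t) t) (hc : Continuous g')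
    (hper : g T = g 0) : (∫ t in (0:ℝ)..T, g' t) = 0 := by
  rw [intervalIntegral.integral_eq_sub_of_hasDerivAt (fun t _ => hder t)
    (hc.intervalIntegrable _ _), hper, sub_self]

lemma sq_comp_le {N : ℕ} (x : EuclideanSpace ℝ (Fin N)) (j : Fin N) : (x j)^2 ≤ ‖x‖^2 := by
  have h : ‖x‖^2 = ∑ i, (x i)^2 := by
    have h0 : ‖x‖ = Real.sqrt (∑ i, ‖x i‖^2) := EuclideanSpace.norm_eq x
    have h1 : (0:ℝ) ≤ ∑ i, ‖x i‖^2 := Finset.sum_nonneg fun i _ => sq_nonneg _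
    rw [h0, Real.sq_sqrt h1]
    simp [Real.norm_eq_abs, sq_abs]
  rw [h]
  exact Finset.single_le_sum (f := fun i => (x i)^2) (fun i _ => sq_nonneg _)
    (Finset.mem_univ j)

lemma norm_le_sqrt_card {N : ℕ} (x : EuclideanSpace ℝ (Fin N)) (K : ℝ) (hK : 0 ≤ K)
    (h : ∀ j, |x j| ≤ K) : ‖x‖ ≤ Real.sqrt N * K := by
  rw [EuclideanSpace.norm_eq]
  have h1 : ∑ i, ‖x i‖^2 ≤ (N : ℝ) * K^2 := by
    calc ∑ i, ‖x i‖^2 ≤ ∑ _i : Fin N, K^2 := by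
          refine Finset.sum_le_sum fun i _ => ?_
          rw [Real.norm_eq_abs]
          exact pow_le_pow_left₀ (abs_nonneg _) (h i) 2
      _ = (N : ℝ) * K^2 := by simp [Finset.sum_const]
  calc Real.sqrt (∑ i, ‖x i‖^2) ≤ Real.sqrt ((N:ℝ) * K^2) := Real.sqrt_le_sqrt h1
    _ = Real.sqrt N * K := by
        rw [Real.sqrt_mul (Nat.cast_nonneg N), Real.sqrt_sq hK]

end Helpers

set_option maxHeartbeats 2000000 in
/-- A priori amplitude bound: any C² `T`-periodic solution of
`M q'' + C q' + ∇V(q) = f(t)` (with symmetric positive-definite `M`, definite damping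
and the component-wise sign condition) satisfies
`sup |q| ≤ √N (r + √T·C_f/C₀)`. -/
theorem stmt9 (N : ℕ) (T C₀ r : ℝ) (hT : 0 < T) (hC₀ : 0 < C₀) (hr : 0 < r)
    (M C : Matrix (Fin N) (Fin N) ℝ) (hMsymm : M.IsSymm) (hMpos : M.PosDef)
    (hC : ∀ x : EuclideanSpace ℝ (Fin N),
      C₀ * ‖x‖^2 ≤ |⟪x, Matrix.toEuclideanLin C x⟫|)
    (V : EuclideanSpace ℝ (Fin N) → ℝ) (hV : ContDiff ℝ 1 V)
    (f : ℝ → EuclideanSpace ℝ (Fin N)) (hf : Continuous f)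
    (hfper : Function.Periodic f T)
    (fbar : EuclideanSpace ℝ (Fin N))
    (hfbar : fbar = (1/T) • ∫ t in (0:ℝ)..T, f t)
    (hsign : ∀ j : Fin N,
      (∀ x : EuclideanSpace ℝ (Fin N), r < |x j| →
        0 < x j * (gradient V x j - fbar j)) ∨
      (∀ x : EuclideanSpace ℝ (Fin N), r < |x j| →
        x j * (gradient V x j - fbar j) < 0))
    (q : ℝ → EuclideanSpace ℝ (Fin N)) (hq : ContDiff ℝ 2 q)
    (hqper : Function.Periodic q T)
    (heq : ∀ t, Matrix.toEuclideanLin M (deriv (deriv q) t)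
      + Matrix.toEuclideanLin C (deriv q t) + gradient V (q t) = f t) :
    ∀ t ∈ Set.Icc 0 T, ‖q t‖ ≤ Real.sqrt N *
      (r + Real.sqrt T * Real.sqrt (∫ s in (0:ℝ)..T, ‖f s‖^2) / C₀) := by
  -- basic differentiability
  have hqd : Differentiable ℝ q := hq.differentiable (by norm_num)
  have hq'cd : ContDiff ℝ 1 (deriv q) := by
    rw [show (2 : WithTop ℕ∞) = 1 + 1 from by norm_num, contDiff_succ_iff_deriv] at hq
    exact hq.2.2
  have hq'd : Differentiable ℝ (deriv q) := hq'cd.differentiable one_ne_zero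
  have hq'c : Continuous (deriv q) := hq'd.continuous
  have hq''c : Continuous (deriv (deriv q)) := (contDiff_one_iff_deriv.mp hq'cd).2
  have hqc : Continuous q := hqd.continuous
  have hgradc : Continuous (gradient V) := by
    have h1 : Continuous (fderiv ℝ V) := hV.continuous_fderiv one_ne_zero
    exact (InnerProductSpace.toDual ℝ _).symm.continuous.comp h1
  -- periodicity of derivatives
  have hq'per : Function.Periodic (deriv q) T := by
    intro s
    have hqq : (fun x => q (x + T)) = q := funext fun x => hqper x
    calc deriv q (s + T) = deriv (fun x => q (x + T)) s := (deriv_comp_add_const q T s).symm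
      _ = deriv q s := by rw [hqq]
  -- continuous linear map versions of the matrices
  set LM : EuclideanSpace ℝ (Fin N) →L[ℝ] EuclideanSpace ℝ (Fin N) :=
    LinearMap.toContinuousLinearMap (Matrix.toEuclideanLin M) with hLM
  set LC : EuclideanSpace ℝ (Fin N) →L[ℝ] EuclideanSpace ℝ (Fin N) :=
    LinearMap.toContinuousLinearMap (Matrix.toEuclideanLin C) with hLC
  have hLMapp : ∀ x, LM x = Matrix.toEuclideanLin M x := fun x => rfl
  have hLCapp : ∀ x, LC x = Matrix.toEuclideanLin C x := fun x => rfl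
  have heq' : ∀ t, LM (deriv (deriv q) t) + LC (deriv q t) + gradient V (q t) = f t := by
    intro t; rw [hLMapp, hLCapp]; exact heq t
  -- symmetry of M
  have hHerm : M.IsHermitian := by
    have := hMsymm
    rw [Matrix.IsSymm] at this
    ext i j
    rw [Matrix.conjTranspose_apply]
    simpa using congrFun (congrFun this i) j
  have hsym : ∀ a b : EuclideanSpace ℝ (Fin N), ⟪LM a, b⟫ = ⟪a, LM b⟫ := by
    have := Matrix.isHermitian_iff_isSymmetric.mp hHerm
    intro a b
    rw [hLMapp, hLMapp]
    exact this a b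
  -- derivative facts
  have hq'hd : ∀ s, HasDerivAt q (deriv q s) s := fun s => (hqd s).hasDerivAt
  have hq''hd : ∀ s, HasDerivAt (deriv q) (deriv (deriv q) s) s := fun s => (hq'd s).hasDerivAt
  -- FTC for the kinetic term
  have hgder : ∀ s, HasDerivAt (fun u => (1/2 : ℝ) * ⟪deriv q u, LM (deriv q u)⟫)
      (⟪deriv q s, LM (deriv (deriv q) s)⟫) s := by
    intro s
    have h1 : HasDerivAt (fun u => (⟪deriv q u, LM (deriv q u)⟫ : ℝ))
        (⟪deriv q s, LM (deriv (deriv q) s)⟫ + ⟪deriv (deriv q) s, LM (deriv q s)⟫) s :=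
      HasDerivAt.inner ℝ (hq''hd s) (LM.hasFDerivAt.comp_hasDerivAt s (hq''hd s))
    have h2 := HasDerivAt.const_mul (1/2 : ℝ) h1
    refine h2.congr_deriv ?_
    have hsy : ⟪LM (deriv (deriv q) s), deriv q s⟫
        = ⟪deriv (deriv q) s, LM (deriv q s)⟫ := hsym _ _
    have hco : ⟪LM (deriv (deriv q) s), deriv q s⟫
        = ⟪deriv q s, LM (deriv (deriv q) s)⟫ := real_inner_comm _ _
    linarith
  have hq'T : deriv q T = deriv q 0 := by simpa using hq'per 0
  have hqT : q T = q 0 := by simpa using hqper 0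
  have I1 : (∫ s in (0:ℝ)..T, (⟪deriv q s, LM (deriv (deriv q) s)⟫ : ℝ)) = 0 := by
    apply per_integral_zero hgder
    · exact hq'c.inner (LM.continuous.comp hq''c)
    · rw [hq'T]
  -- FTC for the potential term
  have hVder : ∀ s, HasDerivAt (fun u => V (q u)) (⟪gradient V (q s), deriv q s⟫) s := by
    intro s
    have h1 : HasGradientAt V (gradient V (q s)) (q s) :=
      ((hV.differentiable one_ne_zero) (q s)).hasGradientAt
    have h2 := h1.hasFDerivAt.comp_hasDerivAt s (hq'hd s)
    simpa [Function.comp_def] using h2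
  have I3 : (∫ s in (0:ℝ)..T, (⟪gradient V (q s), deriv q s⟫ : ℝ)) = 0 := by
    apply per_integral_zero hVder
    · exact (hgradc.comp hqc).inner hq'c
    · rw [hqT]
  -- energy identity
  have hsplit : ∀ s, (⟪deriv q s, f s⟫ : ℝ)
      = ⟪deriv q s, LM (deriv (deriv q) s)⟫ + ⟪deriv q s, LC (deriv q s)⟫
        + ⟪gradient V (q s), deriv q s⟫ := by
    intro s
    rw [← heq' s, inner_add_right, inner_add_right, real_inner_comm (gradient V (q s))]
  have hint1 : IntervalIntegrable (fun s => (⟪deriv q s, LM (deriv (deriv q) s)⟫ : ℝ))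
      MeasureTheory.volume 0 T := (hq'c.inner (LM.continuous.comp hq''c)).intervalIntegrable _ _
  have hint2 : IntervalIntegrable (fun s => (⟪deriv q s, LC (deriv q s)⟫ : ℝ))
      MeasureTheory.volume 0 T := (hq'c.inner (LC.continuous.comp hq'c)).intervalIntegrable _ _
  have hint3 : IntervalIntegrable (fun s => (⟪gradient V (q s), deriv q s⟫ : ℝ))
      MeasureTheory.volume 0 T := ((hgradc.comp hqc).inner hq'c).intervalIntegrable _ _
  have hB : (∫ s in (0:ℝ)..T, (⟪deriv q s, LC (deriv q s)⟫ : ℝ))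
      = ∫ s in (0:ℝ)..T, (⟪deriv q s, f s⟫ : ℝ) := by
    have : (∫ s in (0:ℝ)..T, (⟪deriv q s, f s⟫ : ℝ))
        = (∫ s in (0:ℝ)..T, (⟪deriv q s, LM (deriv (deriv q) s)⟫ : ℝ))
          + (∫ s in (0:ℝ)..T, (⟪deriv q s, LC (deriv q s)⟫ : ℝ))
          + (∫ s in (0:ℝ)..T, (⟪gradient V (q s), deriv q s⟫ : ℝ)) := by
      rw [← intervalIntegral.integral_add hint1 hint2, ← intervalIntegral.integral_add
        (hint1.add hint2) hint3]
      simp_rw [hsplit]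
    rw [this, I1, I3]; ring
  -- quantities
  set A : ℝ := ∫ s in (0:ℝ)..T, ‖deriv q s‖^2 with hAdef
  set B : ℝ := ∫ s in (0:ℝ)..T, (⟪deriv q s, LC (deriv q s)⟫ : ℝ) with hBdef
  set Cf : ℝ := Real.sqrt (∫ s in (0:ℝ)..T, ‖f s‖^2) with hCfdef
  have hCf0 : 0 ≤ Cf := Real.sqrt_nonneg _
  have hA0 : 0 ≤ A := intervalIntegral.integral_nonneg hT.le (fun s _ => sq_nonneg _)
  have hintA : IntervalIntegrable (fun s => ‖deriv q s‖^2) MeasureTheory.volume 0 T :=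
    ((hq'c.norm.pow 2)).intervalIntegrable _ _
  -- C₀ A ≤ |B|
  have hCAB : C₀ * A ≤ |B| := by
    rcases quad_sign hC₀ (Matrix.toEuclideanLin C) hC with hpos | hneg
    · have h1 : (∫ s in (0:ℝ)..T, C₀ * ‖deriv q s‖^2) ≤ B := by
        apply intervalIntegral.integral_mono_on hT.le
          ((continuous_const.mul (hq'c.norm.pow 2)).intervalIntegrable _ _) hint2
        intro s _
        rw [hLCapp]
        exact hpos (deriv q s)
      rw [intervalIntegral.integral_const_mul] at h1
      exact le_abs.mpr (Or.inl h1)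
    · have h1 : B ≤ ∫ s in (0:ℝ)..T, -(C₀ * ‖deriv q s‖^2) := by
        apply intervalIntegral.integral_mono_on hT.le hint2
          (((continuous_const.mul (hq'c.norm.pow 2)).neg).intervalIntegrable _ _)
        intro s _
        rw [hLCapp]
        exact hneg (deriv q s)
      rw [intervalIntegral.integral_neg, intervalIntegral.integral_const_mul] at h1
      refine le_abs.mpr (Or.inr (by linarith))
  -- |B| ≤ √A * Cf
  have hBle : |B| ≤ Real.sqrt A * Cf := by
    have hb1 : |∫ s in (0:ℝ)..T, (⟪deriv q s, f s⟫ : ℝ)|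
        ≤ ∫ s in (0:ℝ)..T, ‖deriv q s‖ * ‖f s‖ := by
      refine (intervalIntegral.abs_integral_le_integral_abs hT.le).trans ?_
      apply intervalIntegral.integral_mono_on hT.le
        (((hq'c.inner hf).abs).intervalIntegrable _ _)
        ((hq'c.norm.mul hf.norm).intervalIntegrable _ _)
      intro s _
      exact abs_real_inner_le_norm _ _
    have hcs := my_cs hT.le (fun s => ‖deriv q s‖) (fun s => ‖f s‖) hq'c.norm hf.norm
    have hnn : 0 ≤ ∫ s in (0:ℝ)..T, ‖deriv q s‖ * ‖f s‖ :=
      intervalIntegral.integral_nonneg hT.le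
        (fun s _ => mul_nonneg (norm_nonneg _) (norm_nonneg _))
    have h2 : (∫ s in (0:ℝ)..T, ‖deriv q s‖ * ‖f s‖)
        ≤ Real.sqrt A * Cf := by
      rw [hCfdef, ← Real.sqrt_mul hA0]
      exact (Real.le_sqrt hnn (by nlinarith [hcs, sq_nonneg (∫ s in (0:ℝ)..T,
        ‖deriv q s‖ * ‖f s‖)])).mpr hcs
    calc |B| = |∫ s in (0:ℝ)..T, (⟪deriv q s, f s⟫ : ℝ)| := by rw [hB]
      _ ≤ ∫ s in (0:ℝ)..T, ‖deriv q s‖ * ‖f s‖ := hb1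
      _ ≤ Real.sqrt A * Cf := h2
  -- √A ≤ Cf / C₀
  have hsqA : Real.sqrt A ≤ Cf / C₀ := by
    have hAs : Real.sqrt A * Real.sqrt A = A := Real.mul_self_sqrt hA0
    have hkey : C₀ * (Real.sqrt A * Real.sqrt A) ≤ Real.sqrt A * Cf := by
      rw [hAs]; exact hCAB.trans hBle
    rcases eq_or_lt_of_le (Real.sqrt_nonneg A) with h0 | h0
    · rw [← h0]; positivity
    · rw [le_div_iff₀ hC₀]
      nlinarith [hkey, h0]
  -- mean value identity
  have hintgrad : IntervalIntegrable (fun s => gradient V (q s)) MeasureTheory.volume 0 T :=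
    (hgradc.comp hqc).intervalIntegrable _ _
  have e1 : (∫ s in (0:ℝ)..T, LM (deriv (deriv q) s)) = 0 := by
    apply per_integral_zero (g := fun u => LM (deriv q u))
      (fun s => LM.hasFDerivAt.comp_hasDerivAt s (hq''hd s)) (LM.continuous.comp hq''c)
    rw [hq'T]
  have e2 : (∫ s in (0:ℝ)..T, LC (deriv q s)) = 0 := by
    apply per_integral_zero (g := fun u => LC (q u))
      (fun s => LC.hasFDerivAt.comp_hasDerivAt s (hq'hd s)) (LC.continuous.comp hq'c)
    rw [hqT]
  have hcLM : Continuous fun s => LM (deriv (deriv q) s) := LM.continuous.comp hq''c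
  have hcLC : Continuous fun s => LC (deriv q s) := LC.continuous.comp hq'c
  have hintf : (∫ s in (0:ℝ)..T, f s) = ∫ s in (0:ℝ)..T, gradient V (q s) := by
    have h5 : (∫ s in (0:ℝ)..T, f s)
        = (∫ s in (0:ℝ)..T, LM (deriv (deriv q) s)) + (∫ s in (0:ℝ)..T, LC (deriv q s))
          + ∫ s in (0:ℝ)..T, gradient V (q s) := by
      rw [← intervalIntegral.integral_add (hcLM.intervalIntegrable _ _)
        (hcLC.intervalIntegrable _ _),
        ← intervalIntegral.integral_add (f := fun s => LM (deriv (deriv q) s) + LC (deriv q s))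
          ((hcLM.add hcLC).intervalIntegrable _ _) hintgrad]
      simp_rw [heq']
    rw [h5, e1, e2]; simp
  have hfint_eq : (∫ s in (0:ℝ)..T, f s) = T • fbar := by
    rw [hfbar, smul_smul, mul_one_div, div_self hT.ne', one_smul]
  have hmean : ∀ j : Fin N, (∫ s in (0:ℝ)..T, (gradient V (q s) j - fbar j)) = 0 := by
    intro j
    have hpc : Continuous fun s => gradient V (q s) j :=
      ((EuclideanSpace.proj j : EuclideanSpace ℝ (Fin N) →L[ℝ] ℝ).continuous.comp
        (hgradc.comp hqc))
    have hsub : (∫ s in (0:ℝ)..T, (gradient V (q s) j - fbar j))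
        = (∫ s in (0:ℝ)..T, gradient V (q s) j) - ∫ s in (0:ℝ)..T, (fbar j : ℝ) :=
      intervalIntegral.integral_sub (hpc.intervalIntegrable _ _) intervalIntegrable_const
    have hproj : (∫ s in (0:ℝ)..T, gradient V (q s) j)
        = (EuclideanSpace.proj j : EuclideanSpace ℝ (Fin N) →L[ℝ] ℝ)
          (∫ s in (0:ℝ)..T, gradient V (q s)) := by
      rw [← (EuclideanSpace.proj (𝕜 := ℝ) j).intervalIntegral_comp_comm hintgrad]
      rfl
    rw [hsub, hproj, ← hintf, hfint_eq]
    rw [intervalIntegral.integral_const, map_smul]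
    simp [smul_eq_mul]
  -- each component is small at some time
  have hwc : ∀ j : Fin N, Continuous fun s => q s j := fun j =>
    (EuclideanSpace.proj j : EuclideanSpace ℝ (Fin N) →L[ℝ] ℝ).continuous.comp hqc
  have hsmall : ∀ j : Fin N, ∃ tj ∈ Set.Icc (0:ℝ) T, |q tj j| ≤ r := by
    intro j
    by_contra hcon
    push_neg at hcon
    have hdicho : (∀ s ∈ Set.Icc (0:ℝ) T, r < q s j) ∨
        (∀ s ∈ Set.Icc (0:ℝ) T, q s j < -r) := by
      by_contra hd
      push_neg at hd
      obtain ⟨⟨s₁, hs₁, h₁⟩, ⟨s₂, hs₂, h₂⟩⟩ := hd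
      have hA1 : q s₁ j < -r := by
        have := hcon s₁ hs₁
        rcases abs_cases (q s₁ j) with ⟨he, _⟩ | ⟨he, _⟩ <;> linarith
      have hA2 : r < q s₂ j := by
        have := hcon s₂ hs₂
        rcases abs_cases (q s₂ j) with ⟨he, _⟩ | ⟨he, _⟩ <;> linarith
      have hsub : Set.uIcc s₁ s₂ ⊆ Set.Icc (0:ℝ) T := by
        rw [show Set.Icc (0:ℝ) T = Set.uIcc 0 T from (Set.uIcc_of_le hT.le).symm] at hs₁ hs₂ ⊢
        exact Set.uIcc_subset_uIcc hs₁ hs₂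
      have h0m : (0:ℝ) ∈ Set.uIcc (q s₁ j) (q s₂ j) := by
        rw [Set.mem_uIcc]; left; constructor <;> linarith
      obtain ⟨s₀, hs₀, hqs₀⟩ := intermediate_value_uIcc ((hwc j).continuousOn) h0m
      have hx := hcon s₀ (hsub hs₀)
      have hq0 : q s₀ j = 0 := hqs₀
      rw [hq0] at hx
      simp at hx; linarith
    have hzero := hmean j
    have hgjc : Continuous fun s => gradient V (q s) j - fbar j :=
      (((EuclideanSpace.proj j : EuclideanSpace ℝ (Fin N) →L[ℝ] ℝ).continuous.comp
        (hgradc.comp hqc)).sub continuous_const)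
    have hposint : ∀ g : ℝ → ℝ, Continuous g → (∀ s ∈ Set.Ioo (0:ℝ) T, 0 < g s) →
        0 < ∫ s in (0:ℝ)..T, g s := fun g hg hgp =>
      intervalIntegral.intervalIntegral_pos_of_pos_on (hg.intervalIntegrable _ _) hgp hT
    rcases hsign j with hsgn | hsgn <;> rcases hdicho with hmono | hmono
    · have hp : ∀ s ∈ Set.Ioo (0:ℝ) T, 0 < gradient V (q s) j - fbar j := by
        intro s hs
        have hs' : s ∈ Set.Icc (0:ℝ) T := Set.mem_Icc_of_Ioo hs
        have h1 := hsgn (q s) (hcon s hs')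
        have h2 := hmono s hs'
        rcases mul_pos_iff.mp h1 with ⟨_, hb⟩ | ⟨ha, _⟩
        · exact hb
        · linarith
      linarith [hposint _ hgjc hp, hzero]
    · have hp : ∀ s ∈ Set.Ioo (0:ℝ) T, 0 < -(gradient V (q s) j - fbar j) := by
        intro s hs
        have hs' : s ∈ Set.Icc (0:ℝ) T := Set.mem_Icc_of_Ioo hs
        have h1 := hsgn (q s) (hcon s hs')
        have h2 := hmono s hs'
        rcases mul_pos_iff.mp h1 with ⟨ha, _⟩ | ⟨_, hb⟩
        · linarith
        · linarith
      have := hposint (fun s => -(gradient V (q s) j - fbar j)) hgjc.neg hp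
      rw [intervalIntegral.integral_neg] at this
      linarith [hzero]
    · have hp : ∀ s ∈ Set.Ioo (0:ℝ) T, 0 < -(gradient V (q s) j - fbar j) := by
        intro s hs
        have hs' : s ∈ Set.Icc (0:ℝ) T := Set.mem_Icc_of_Ioo hs
        have h1 := hsgn (q s) (hcon s hs')
        have h2 := hmono s hs'
        rcases mul_neg_iff.mp h1 with ⟨_, hb⟩ | ⟨ha, _⟩
        · linarith
        · linarith
      have := hposint (fun s => -(gradient V (q s) j - fbar j)) hgjc.neg hp
      rw [intervalIntegral.integral_neg] at this
      linarith [hzero]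
    · have hp : ∀ s ∈ Set.Ioo (0:ℝ) T, 0 < gradient V (q s) j - fbar j := by
        intro s hs
        have hs' : s ∈ Set.Icc (0:ℝ) T := Set.mem_Icc_of_Ioo hs
        have h1 := hsgn (q s) (hcon s hs')
        have h2 := hmono s hs'
        rcases mul_neg_iff.mp h1 with ⟨ha, _⟩ | ⟨_, hb⟩
        · linarith
        · linarith
      linarith [hposint _ hgjc hp, hzero]
  -- final bound
  intro t ht
  have hK0 : 0 ≤ r + Real.sqrt T * Cf / C₀ := by positivity
  apply norm_le_sqrt_card _ _ hK0
  intro j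
  obtain ⟨tj, htj, htjr⟩ := hsmall j
  have hwder : ∀ u, HasDerivAt (fun v => q v j) (deriv q u j) u := by
    intro u
    have := (EuclideanSpace.proj (𝕜 := ℝ) j).hasFDerivAt.comp_hasDerivAt u (hq'hd u)
    simpa [Function.comp_def] using this
  have hq'jc : Continuous fun s => deriv q s j :=
    (EuclideanSpace.proj j : EuclideanSpace ℝ (Fin N) →L[ℝ] ℝ).continuous.comp hq'c
  have hftc : (∫ u in tj..t, deriv q u j) = q t j - q tj j :=
    intervalIntegral.integral_eq_sub_of_hasDerivAt (fun u _ => hwder u)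
      (hq'jc.intervalIntegrable _ _)
  have habs : |∫ u in tj..t, deriv q u j| ≤ ∫ u in (0:ℝ)..T, |deriv q u j| := by
    rcases le_total tj t with hle | hle
    · refine (intervalIntegral.abs_integral_le_integral_abs hle).trans ?_
      exact intervalIntegral.integral_mono_interval htj.1 hle ht.2
        (Filter.Eventually.of_forall fun u => abs_nonneg _)
        ((hq'jc.abs).intervalIntegrable _ _)
    · rw [intervalIntegral.integral_symm, abs_neg]
      refine (intervalIntegral.abs_integral_le_integral_abs hle).trans ?_
      exact intervalIntegral.integral_mono_interval ht.1 hle htj.2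
        (Filter.Eventually.of_forall fun u => abs_nonneg _)
        ((hq'jc.abs).intervalIntegrable _ _)
  have hl2 : (∫ u in (0:ℝ)..T, |deriv q u j|) ≤ Real.sqrt T * Real.sqrt A := by
    have hcs := my_cs hT.le (fun u => |deriv q u j|) (fun _ => (1:ℝ))
      (hq'jc.abs) continuous_const
    have h1 : (∫ u in (0:ℝ)..T, |deriv q u j| * 1) = ∫ u in (0:ℝ)..T, |deriv q u j| := by
      simp
    have h2 : (∫ u in (0:ℝ)..T, ((1:ℝ))^2) = T := by simp
    have h3 : (∫ u in (0:ℝ)..T, |deriv q u j|^2) ≤ A := by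
      apply intervalIntegral.integral_mono_on hT.le
        ((hq'jc.abs.pow 2).intervalIntegrable _ _) hintA
      intro s _
      simp only [Pi.pow_apply, sq_abs]
      exact sq_comp_le (deriv q s) j
    rw [h1, h2] at hcs
    have hnn : (0:ℝ) ≤ ∫ u in (0:ℝ)..T, |deriv q u j| :=
      intervalIntegral.integral_nonneg hT.le (fun u _ => abs_nonneg _)
    have hub : (∫ u in (0:ℝ)..T, |deriv q u j|)^2 ≤ T * A := by
      calc (∫ u in (0:ℝ)..T, |deriv q u j|)^2
          ≤ (∫ u in (0:ℝ)..T, |deriv q u j|^2) * T := hcs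
        _ ≤ T * A := by rw [mul_comm]; exact mul_le_mul_of_nonneg_left h3 hT.le
    calc (∫ u in (0:ℝ)..T, |deriv q u j|) ≤ Real.sqrt (T * A) :=
        (Real.le_sqrt hnn (by positivity)).mpr hub
      _ = Real.sqrt T * Real.sqrt A := Real.sqrt_mul hT.le A
  have hfinal : |q t j| ≤ r + Real.sqrt T * Real.sqrt A := by
    have h1 : |q t j| ≤ |q tj j| + |q t j - q tj j| := by
      have := abs_add_le (q tj j) (q t j - q tj j)
      simpa using this
    have h2 : |q t j - q tj j| ≤ Real.sqrt T * Real.sqrt A := by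
      rw [← hftc]
      exact habs.trans hl2
    linarith
  have hAle : Real.sqrt T * Real.sqrt A ≤ Real.sqrt T * Cf / C₀ := by
    rw [mul_div_assoc]
    exact mul_le_mul_of_nonneg_left hsqA (Real.sqrt_nonneg T)
  linarith
end
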